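/- arXiv:1912.02223 — 5 statements merged into one kernel-verified Lean document; each statement's English description precedes it below -/
import Mathlib

section
/- If D is Hermitian positive definite, then c̃ = D^{-1}[ Σ_{i=1}^{N} B_i^H Σ_i^{-1} v_i − M^H A^{-1} (Σ_{i=1}^{N} x_i^* Σ_i^{-1} v_i) ] is the unique minimizer over c ∈ ℂ^L of the function C(c) = Σ_{i=1}^{N} (v_i − B_i c)^H Σ_i^{-1} (v_i − B_i c) − (Σ_{i=1}^{N} x_i^* Σ_i^{-1} (v_i − B_i c))^H A^{-1} (Σ_{i=1}^{N} x_i^* Σ_i^{-1} (v_i − B_i c)). (This is the optimality of the EIC estimate in Step 2 of the JML-MAP procedure of the paper.) -/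
/-!
Each of the two terms of `C` is a Hermitian quadratic form in `c`, so
`C(c) = k - cᴴw - wᴴc + cᴴDc` with `w = ∑ᵢ Bᵢᴴ Σᵢ⁻¹ vᵢ - Mᴴ A⁻¹ ∑ᵢ xᵢ* Σᵢ⁻¹ vᵢ`.
As `D c̃ = w`, completing the square gives `C(c) = C(c̃) + (c - c̃)ᴴ D (c - c̃)`, and the last term
has positive real part for `c ≠ c̃` because `D` is positive definite.
-/

open Matrix BigOperators
open scoped ComplexOrder

section QuadraticExpansion

variable {R m n ι : Type*} [CommRing R] [Fintype m] [Fintype n]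

lemma sum_smul_mulVec_sub_mulVec (s : Finset ι) (a : ι → R) (P : ι → Matrix m m R)
    (Z : ι → Matrix m n R) (y : ι → m → R) (c : n → R) :
    ∑ i ∈ s, a i • (P i *ᵥ (y i - Z i *ᵥ c))
      = ∑ i ∈ s, a i • (P i *ᵥ y i) - (∑ i ∈ s, a i • (P i * Z i)) *ᵥ c := by
  simp only [sum_mulVec, ← Finset.sum_sub_distrib, mulVec_sub, smul_sub, smul_mulVec,
    mulVec_mulVec]

variable [StarRing R]

def HasQuadraticExpansion (f : (n → R) → R) (D : Matrix n n R) (w : n → R) : Prop :=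
  ∃ k, ∀ c, f c = k - star c ⬝ᵥ w - star w ⬝ᵥ c + star c ⬝ᵥ (D *ᵥ c)

lemma hasQuadraticExpansion_residual {P : Matrix m m R} (hP : P.IsHermitian)
    (Z : Matrix m n R) (y : m → R) :
    HasQuadraticExpansion (fun c ↦ star (y - Z *ᵥ c) ⬝ᵥ (P *ᵥ (y - Z *ᵥ c)))
      (Zᴴ * P * Z) (Zᴴ *ᵥ (P *ᵥ y)) := by
  refine ⟨star y ⬝ᵥ (P *ᵥ y), fun c ↦ ?_⟩
  simp only [star_sub, sub_dotProduct, dotProduct_sub, mulVec_sub, star_mulVec, dotProduct_mulVec,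
    sub_vecMul, mulVec_mulVec, vecMul_vecMul, conjTranspose_mul, conjTranspose_conjTranspose, hP.eq,
    Matrix.mul_assoc]
  ring

namespace HasQuadraticExpansion

variable {f g : (n → R) → R} {D D' : Matrix n n R} {w w' : n → R}

lemma sub (hf : HasQuadraticExpansion f D w) (hg : HasQuadraticExpansion g D' w') :
    HasQuadraticExpansion (fun c ↦ f c - g c) (D - D') (w - w') := by
  obtain ⟨k, hk⟩ := hf
  obtain ⟨k', hk'⟩ := hg
  refine ⟨k - k', fun c ↦ ?_⟩
  simp only [hk, hk', sub_mulVec, dotProduct_sub, star_sub, sub_dotProduct]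
  ring

lemma sum {s : Finset ι} {f : ι → (n → R) → R} {D : ι → Matrix n n R} {w : ι → n → R}
    (h : ∀ i ∈ s, HasQuadraticExpansion (f i) (D i) (w i)) :
    HasQuadraticExpansion (fun c ↦ ∑ i ∈ s, f i c) (∑ i ∈ s, D i) (∑ i ∈ s, w i) := by
  choose! k hk using h
  refine ⟨∑ i ∈ s, k i, fun c ↦ ?_⟩
  dsimp only
  rw [Finset.sum_congr rfl fun i hi ↦ hk i hi c]
  simp only [Finset.sum_add_distrib, Finset.sum_sub_distrib, dotProduct_sum, sum_dotProduct,
    star_sum, sum_mulVec]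

lemma eq_add_of_mulVec_eq (h : HasQuadraticExpansion f D w) (hD : D.IsHermitian) {c₀ : n → R}
    (hc₀ : D *ᵥ c₀ = w) (c : n → R) :
    f c = f c₀ + star (c - c₀) ⬝ᵥ (D *ᵥ (c - c₀)) := by
  obtain ⟨k, hk⟩ := h
  rw [hk, hk, ← hc₀]
  simp only [star_sub, sub_dotProduct, dotProduct_sub, mulVec_sub, star_mulVec, dotProduct_mulVec,
    hD.eq, sub_vecMul]
  ring

end HasQuadraticExpansion

end QuadraticExpansion

lemma Matrix.PosDef.re_dotProduct_mulVec_pos {n : Type*} [Fintype n] {D : Matrix n n ℂ}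
    (hD : D.PosDef) {z : n → ℂ} (hz : z ≠ 0) : 0 < (star z ⬝ᵥ (D *ᵥ z)).re :=
  (Complex.lt_def.mp (hD.dotProduct_mulVec_pos hz)).1

theorem eic_estimate_unique_minimizer_general
    (Nr L N : ℕ)
    (S : Fin N → Matrix (Fin Nr) (Fin Nr) ℂ)
    (hS : ∀ i, (S i).PosDef)
    (x : Fin N → ℂ)
    (B : Fin N → Matrix (Fin Nr) (Fin L) ℂ)
    (v : Fin N → (Fin Nr → ℂ))
    (A : Matrix (Fin Nr) (Fin Nr) ℂ)
    (hApd : A.PosDef)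
    (M : Matrix (Fin Nr) (Fin L) ℂ)
    (hM : M = ∑ i, (starRingEnd ℂ) (x i) • ((S i)⁻¹ * B i))
    (D : Matrix (Fin L) (Fin L) ℂ)
    (hD : D = (∑ i, (B i)ᴴ * (S i)⁻¹ * B i) - Mᴴ * A⁻¹ * M)
    (hDpd : D.PosDef)
    (ctil : Fin L → ℂ)
    (hctil : ctil = D⁻¹ *ᵥ ((∑ i, (B i)ᴴ *ᵥ ((S i)⁻¹ *ᵥ v i))
        - Mᴴ *ᵥ (A⁻¹ *ᵥ (∑ i, (starRingEnd ℂ) (x i) • ((S i)⁻¹ *ᵥ v i)))))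
    (Cf : (Fin L → ℂ) → ℂ)
    (hCf : ∀ c, Cf c
        = (∑ i, star (v i - B i *ᵥ c) ⬝ᵥ ((S i)⁻¹ *ᵥ (v i - B i *ᵥ c)))
          - star (∑ i, (starRingEnd ℂ) (x i) • ((S i)⁻¹ *ᵥ (v i - B i *ᵥ c))) ⬝ᵥ
              (A⁻¹ *ᵥ (∑ i, (starRingEnd ℂ) (x i) • ((S i)⁻¹ *ᵥ (v i - B i *ᵥ c))))) :
    ∀ c : Fin L → ℂ, c ≠ ctil → (Cf ctil).re < (Cf c).re := by
  set u := ∑ i, (starRingEnd ℂ) (x i) • ((S i)⁻¹ *ᵥ v i)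
  have hCf_quad : HasQuadraticExpansion Cf D
      ((∑ i, (B i)ᴴ *ᵥ ((S i)⁻¹ *ᵥ v i)) - Mᴴ *ᵥ (A⁻¹ *ᵥ u)) := by
    have hquad := (HasQuadraticExpansion.sum (s := .univ) fun i _ ↦ hasQuadraticExpansion_residual
      (hS i).inv.isHermitian (B i) (v i)).sub
      (hasQuadraticExpansion_residual hApd.inv.isHermitian M u)
    rw [hD]
    convert hquad using 1
    funext c
    rw [hCf, sum_smul_mulVec_sub_mulVec, ← hM]
  have : Invertible D := hDpd.isUnit.invertible
  have hDctil : D *ᵥ ctil = (∑ i, (B i)ᴴ *ᵥ ((S i)⁻¹ *ᵥ v i)) - Mᴴ *ᵥ (A⁻¹ *ᵥ u) := by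
    rw [hctil, mulVec_mulVec, mul_inv_of_invertible, one_mulVec]
  intro c hc
  rw [hCf_quad.eq_add_of_mulVec_eq hDpd.isHermitian hDctil c, Complex.add_re]
  linarith [hDpd.re_dotProduct_mulVec_pos (sub_ne_zero.mpr hc)]

/-- **Optimality of the EIC estimate** (Step 2 of the JML-MAP procedure): if `D` is
Hermitian positive definite then `c̃ = D⁻¹[∑ᵢ Bᵢᴴ Σᵢ⁻¹ vᵢ − Mᴴ A⁻¹ ∑ᵢ xᵢ* Σᵢ⁻¹ vᵢ]`
is the unique minimizer of `C(c)` over `c ∈ ℂᴸ`. -/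
theorem eic_estimate_unique_minimizer
    (Nr L N : ℕ) (hNr : 0 < Nr) (hL : 0 < L) (hN : 0 < N)
    (S : Fin N → Matrix (Fin Nr) (Fin Nr) ℂ)
    (hS : ∀ i, (S i).PosDef)
    (x : Fin N → ℂ)
    (B : Fin N → Matrix (Fin Nr) (Fin L) ℂ)
    (v : Fin N → (Fin Nr → ℂ))
    (A : Matrix (Fin Nr) (Fin Nr) ℂ)
    (hA : A = 1 + ∑ i, ((Complex.normSq (x i) : ℂ)) • (S i)⁻¹)
    (hApd : A.PosDef)
    (M : Matrix (Fin Nr) (Fin L) ℂ)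
    (hM : M = ∑ i, (starRingEnd ℂ) (x i) • ((S i)⁻¹ * B i))
    (D : Matrix (Fin L) (Fin L) ℂ)
    (hD : D = (∑ i, (B i)ᴴ * (S i)⁻¹ * B i) - Mᴴ * A⁻¹ * M)
    (hDpd : D.PosDef)
    (ctil : Fin L → ℂ)
    (hctil : ctil = D⁻¹ *ᵥ ((∑ i, (B i)ᴴ *ᵥ ((S i)⁻¹ *ᵥ v i))
        - Mᴴ *ᵥ (A⁻¹ *ᵥ (∑ i, (starRingEnd ℂ) (x i) • ((S i)⁻¹ *ᵥ v i)))))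
    (Cf : (Fin L → ℂ) → ℂ)
    (hCf : ∀ c, Cf c
        = (∑ i, star (v i - B i *ᵥ c) ⬝ᵥ ((S i)⁻¹ *ᵥ (v i - B i *ᵥ c)))
          - star (∑ i, (starRingEnd ℂ) (x i) • ((S i)⁻¹ *ᵥ (v i - B i *ᵥ c))) ⬝ᵥ
              (A⁻¹ *ᵥ (∑ i, (starRingEnd ℂ) (x i) • ((S i)⁻¹ *ᵥ (v i - B i *ᵥ c))))) :
    ∀ c : Fin L → ℂ, c ≠ ctil → (Cf ctil).re < (Cf c).re :=
  eic_estimate_unique_minimizer_general Nr L N S hS x B v A hApd M hM D hD hDpd ctil hctil Cf hCf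
end

section
/- Suppose that the only vector z ∈ ℂ^L with B_i z = 0 for all i = 1,…,N is z = 0. Then the matrix D = Σ_{i=1}^{N} (1/σ_i²) B_i^H B_i − (1/a) (Σ_{i=1}^{N} (x_i^*/σ_i²) B_i)^H (Σ_{i=1}^{N} (x_i^*/σ_i²) B_i) is positive definite, i.e., z^H D z is a positive real number for every nonzero z ∈ ℂ^L. (Appendix B of the paper, proved via the Cauchy–Schwarz inequality; this is the claimed positive-definiteness of D_n in the scalar-covariance case.) -/
/-!
For `z ≠ 0` put `uᵢ = Bᵢ z`. Then `zᴴ D z = ∑ ‖uᵢ‖²/σᵢ² - ‖∑ (xᵢ*/σᵢ²) uᵢ‖² / a`, and the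
weighted Cauchy–Schwarz inequality bounds that squared norm by `(a - 1) ∑ ‖uᵢ‖²/σᵢ²`, so
`zᴴ D z ≥ (∑ ‖uᵢ‖²/σᵢ²) / a`, which is positive because some `uᵢ` is nonzero.
-/

open Matrix
open scoped ComplexOrder

theorem norm_sum_smul_sq_le {ι 𝕜 E : Type*} [NormedField 𝕜] [SeminormedAddCommGroup E]
    [NormedSpace 𝕜 E] (s : Finset ι) {w : ι → ℝ} (hw : ∀ i ∈ s, 0 < w i) (c : ι → 𝕜)
    (u : ι → E) :
    ‖∑ i ∈ s, c i • u i‖ ^ 2 ≤ (∑ i ∈ s, ‖c i‖ ^ 2 / w i) * ∑ i ∈ s, w i * ‖u i‖ ^ 2 := by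
  calc ‖∑ i ∈ s, c i • u i‖ ^ 2 ≤ (∑ i ∈ s, ‖c i‖ * ‖u i‖) ^ 2 := by
        gcongr
        exact (norm_sum_le _ _).trans_eq (by simp only [norm_smul])
    _ ≤ _ := by
        refine Finset.sum_sq_le_sum_mul_sum_of_sq_le_mul s (fun i hi => ?_) (fun i hi => ?_)
          (fun i hi => ?_) <;> have := hw i hi
        · positivity
        · positivity
        · exact le_of_eq (by field_simp)

section Gram

variable {m n 𝕜 : Type*} [Fintype m] [Fintype n] [RCLike 𝕜]

theorem star_dotProduct_conjTranspose_mul_self_mulVec (A : Matrix m n 𝕜) (z : n → 𝕜) :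
    star z ⬝ᵥ ((Aᴴ * A) *ᵥ z) = ((‖WithLp.toLp 2 (A *ᵥ z)‖ ^ 2 : ℝ) : 𝕜) := by
  rw [← mulVec_mulVec, dotProduct_mulVec, ← star_mulVec, dotProduct_comm, RCLike.ofReal_pow,
    ← inner_self_eq_norm_sq_to_K, EuclideanSpace.inner_toLp_toLp]

theorem posDef_sum_smul_conjTranspose_mul_self_sub {ι : Type*} [Fintype ι]
    (A : ι → Matrix m n 𝕜) (hA : ∀ z : n → 𝕜, (∀ i, A i *ᵥ z = 0) → z = 0)
    {w : ι → ℝ} (hw : ∀ i, 0 < w i) (c : ι → 𝕜) {b : ℝ} (hb : 0 ≤ b)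
    (hbc : b * ∑ i, ‖c i‖ ^ 2 / w i < 1) :
    (∑ i, (w i : 𝕜) • ((A i)ᴴ * A i)
      - (b : 𝕜) • ((∑ i, c i • A i)ᴴ * ∑ i, c i • A i)).PosDef := by
  refine posDef_iff_dotProduct_mulVec.mpr ⟨?_, fun z hz => ?_⟩
  · simp [IsHermitian, conjTranspose_sum, conjTranspose_mul]
  set u : ι → EuclideanSpace 𝕜 m := fun i => WithLp.toLp 2 (A i *ᵥ z)
  set S := ∑ i, w i * ‖u i‖ ^ 2
  have hquad : star z ⬝ᵥ ((∑ i, (w i : 𝕜) • ((A i)ᴴ * A i)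
      - (b : 𝕜) • ((∑ i, c i • A i)ᴴ * ∑ i, c i • A i)) *ᵥ z)
      = ((S - b * ‖∑ i, c i • u i‖ ^ 2 : ℝ) : 𝕜) := by
    simp only [algebraMap_smul, sub_mulVec, sum_mulVec, smul_mulVec, dotProduct_sub,
      dotProduct_sum, dotProduct_smul, star_dotProduct_conjTranspose_mul_self_mulVec,
      WithLp.toLp_sum, WithLp.toLp_smul, map_sub, map_sum, map_mul, map_pow,
      RCLike.real_smul_eq_coe_mul, S, u]
  have hS : 0 < S := by
    obtain ⟨i, hi⟩ : ∃ i, A i *ᵥ z ≠ 0 := by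
      by_contra! h
      exact hz (hA z h)
    refine Finset.sum_pos' (fun i _ => by have := hw i; positivity) ⟨i, Finset.mem_univ i, ?_⟩
    have := hw i
    have : 0 < ‖u i‖ := norm_pos_iff.mpr (by simpa [u] using hi)
    positivity
  have hCS := norm_sum_smul_sq_le Finset.univ (fun i _ => hw i) c u
  rw [hquad, RCLike.ofReal_pos]
  nlinarith

end Gram

theorem appendixB_D_posDef_general
    (Nr L N : ℕ)
    (σ : Fin N → ℝ) (hσ : ∀ i, 0 < σ i)
    (x : Fin N → ℂ)
    (B : Fin N → Matrix (Fin Nr) (Fin L) ℂ)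
    (a : ℝ) (ha : a = 1 + ∑ i, Complex.normSq (x i) / (σ i) ^ 2)
    (D : Matrix (Fin L) (Fin L) ℂ)
    (hD : D = (∑ i, ((1 / (σ i) ^ 2 : ℝ) : ℂ) • ((B i)ᴴ * B i))
        - ((1 / a : ℝ) : ℂ) •
            ((∑ i, ((starRingEnd ℂ) (x i) / (((σ i) ^ 2 : ℝ) : ℂ)) • B i)ᴴ
              * (∑ i, ((starRingEnd ℂ) (x i) / (((σ i) ^ 2 : ℝ) : ℂ)) • B i)))
    (hinj : ∀ z : Fin L → ℂ, (∀ i, B i *ᵥ z = 0) → z = 0) :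
    D.PosDef := by
  have hw (i : Fin N) : 0 < 1 / σ i ^ 2 := by have := hσ i; positivity
  have hK :
      ∑ i, ‖(starRingEnd ℂ) (x i) / (((σ i) ^ 2 : ℝ) : ℂ)‖ ^ 2 / (1 / σ i ^ 2) = a - 1 := by
    rw [ha, add_sub_cancel_left]
    refine Finset.sum_congr rfl fun i _ => ?_
    have := (hσ i).ne'
    rw [norm_div, RCLike.norm_conj, Complex.norm_real, norm_pow, Real.norm_eq_abs, sq_abs,
      Complex.normSq_eq_norm_sq]
    field_simp
  have ha1 : 1 ≤ a := by
    rw [ha, le_add_iff_nonneg_right]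
    exact Finset.sum_nonneg fun i _ => div_nonneg (Complex.normSq_nonneg _) (sq_nonneg _)
  have hsmall : 1 / a * (a - 1) < 1 := by
    rw [one_div_mul_eq_div, div_lt_one (by linarith)]
    linarith
  rw [hD]
  exact posDef_sum_smul_conjTranspose_mul_self_sub B hinj hw _
    (one_div_nonneg.mpr (by linarith)) (hK ▸ hsmall)

/-- **Appendix B** (scalar-covariance case): if the only `z` with `Bᵢ z = 0` for all `i`
is `z = 0`, then `D = ∑ᵢ (1/σᵢ²) Bᵢᴴ Bᵢ − (1/a) (∑ᵢ (xᵢ*/σᵢ²) Bᵢ)ᴴ (∑ᵢ (xᵢ*/σᵢ²) Bᵢ)`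
is positive definite: `zᴴ D z` is a positive real number for every nonzero `z ∈ ℂᴸ`. -/
theorem appendixB_D_posDef
    (Nr L N : ℕ) (hNr : 0 < Nr) (hL : 0 < L) (hN : 0 < N)
    (σ : Fin N → ℝ) (hσ : ∀ i, 0 < σ i)
    (x : Fin N → ℂ)
    (B : Fin N → Matrix (Fin Nr) (Fin L) ℂ)
    (a : ℝ) (ha : a = 1 + ∑ i, Complex.normSq (x i) / (σ i) ^ 2)
    (D : Matrix (Fin L) (Fin L) ℂ)
    (hD : D = (∑ i, ((1 / (σ i) ^ 2 : ℝ) : ℂ) • ((B i)ᴴ * B i))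
        - ((1 / a : ℝ) : ℂ) •
            ((∑ i, ((starRingEnd ℂ) (x i) / (((σ i) ^ 2 : ℝ) : ℂ)) • B i)ᴴ
              * (∑ i, ((starRingEnd ℂ) (x i) / (((σ i) ^ 2 : ℝ) : ℂ)) • B i)))
    (hinj : ∀ z : Fin L → ℂ, (∀ i, B i *ᵥ z = 0) → z = 0) :
    D.PosDef :=
  appendixB_D_posDef_general Nr L N σ hσ x B a ha D hD hinj
end

section
/- Assume D (built from the matrices B_i) is invertible and fix u_i ∈ ℂ^{N_r} and c ∈ ℂ^L. For a real scalar t > 0, let c̃_t denote the estimator obtained by replacing every B_i with t·B_i throughout (in D, in M, and with observations v_i = t B_i c + u_i). Then the estimation error scales inversely with t: c − c̃_t = (1/t)(c − c̃_1); consequently, for every index n the residual interference vector (t B_n)(c − c̃_t) = B_n (c − c̃_1) is independent of t. (Algebraic content of Proposition 2: the residual interference power is bounded, indeed invariant, as the interference power is scaled up.) -/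
open Matrix BigOperators
open scoped ComplexOrder

lemma my_sum_mulVec {n m ι : Type*} [Fintype m] [DecidableEq m]
    (s : Finset ι) (f : ι → Matrix n m ℂ) (v : m → ℂ) :
    (∑ i ∈ s, f i) *ᵥ v = ∑ i ∈ s, f i *ᵥ v := by
  ext j
  simp only [Matrix.mulVec, dotProduct, Finset.sum_apply, Matrix.sum_apply,
    Finset.sum_mul]
  rw [Finset.sum_comm]

/-- **Algebraic content of Proposition 2**: scaling every interference matrix `Bᵢ` by a
real factor `t > 0` (in `D`, in `M`, and in the observations `vᵢ = t Bᵢ c + uᵢ`) scales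
the EIC estimation error inversely: `c − c̃_t = (1/t)(c − c̃_1)`; consequently the
residual interference `(t Bₙ)(c − c̃_t) = Bₙ (c − c̃_1)` is independent of `t`. -/
theorem residual_interference_invariant_under_scaling
    (Nr L N : ℕ) (hNr : 0 < Nr) (hL : 0 < L) (hN : 0 < N)
    (S : Fin N → Matrix (Fin Nr) (Fin Nr) ℂ)
    (hS : ∀ i, (S i).PosDef)
    (x : Fin N → ℂ)
    (B : Fin N → Matrix (Fin Nr) (Fin L) ℂ)
    (A : Matrix (Fin Nr) (Fin Nr) ℂ)
    (hA : A = 1 + ∑ i, ((Complex.normSq (x i) : ℂ)) • (S i)⁻¹)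
    (hApd : A.PosDef)
    (Mf : (Fin N → Matrix (Fin Nr) (Fin L) ℂ) → Matrix (Fin Nr) (Fin L) ℂ)
    (hMf : ∀ Bs, Mf Bs = ∑ i, (starRingEnd ℂ) (x i) • ((S i)⁻¹ * Bs i))
    (Df : (Fin N → Matrix (Fin Nr) (Fin L) ℂ) → Matrix (Fin L) (Fin L) ℂ)
    (hDf : ∀ Bs, Df Bs = (∑ i, (Bs i)ᴴ * (S i)⁻¹ * Bs i) - (Mf Bs)ᴴ * A⁻¹ * Mf Bs)
    (est : (Fin N → Matrix (Fin Nr) (Fin L) ℂ) → (Fin N → (Fin Nr → ℂ)) → (Fin L → ℂ))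
    (hest : ∀ Bs v, est Bs v = (Df Bs)⁻¹ *ᵥ ((∑ i, (Bs i)ᴴ *ᵥ ((S i)⁻¹ *ᵥ v i))
        - (Mf Bs)ᴴ *ᵥ (A⁻¹ *ᵥ (∑ i, (starRingEnd ℂ) (x i) • ((S i)⁻¹ *ᵥ v i)))))
    (hDinv : IsUnit (Df B))
    (c : Fin L → ℂ) (u : Fin N → (Fin Nr → ℂ))
    (t : ℝ) (ht : 0 < t)
    (ctilt : Fin L → ℂ)
    (hctilt : ctilt = est (fun i => (t : ℂ) • B i)
        (fun i => ((t : ℂ) • B i) *ᵥ c + u i))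
    (ctil1 : Fin L → ℂ)
    (hctil1 : ctil1 = est B (fun i => B i *ᵥ c + u i)) :
    c - ctilt = ((1 / t : ℝ) : ℂ) • (c - ctil1)
      ∧ ∀ n : Fin N, ((t : ℂ) • B n) *ᵥ (c - ctilt) = B n *ᵥ (c - ctil1) := by
  have ht0 : (t : ℂ) ≠ 0 := by
    simpa using ne_of_gt ht
  have htstar : star (t : ℂ) = (t : ℂ) := by
    simp [Complex.star_def, Complex.conj_ofReal]
  have hDunit : IsUnit (Df B).det := (Matrix.isUnit_iff_isUnit_det _).mp hDinv
  -- scaling of M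
  have hM : Mf (fun i => (t : ℂ) • B i) = (t : ℂ) • Mf B := by
    rw [hMf, hMf, Finset.smul_sum]
    refine Finset.sum_congr rfl fun i _ => ?_
    rw [Matrix.mul_smul, smul_comm]
  -- scaling of D
  have hD : Df (fun i => (t : ℂ) • B i) = ((t : ℂ) ^ 2) • Df B := by
    rw [hDf, hDf, hM]
    rw [smul_sub, Finset.smul_sum]
    congr 1
    · refine Finset.sum_congr rfl fun i _ => ?_
      rw [Matrix.conjTranspose_smul, htstar, Matrix.smul_mul, Matrix.smul_mul,
        Matrix.mul_smul, smul_smul, sq]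
    · rw [Matrix.conjTranspose_smul, htstar, Matrix.smul_mul, Matrix.smul_mul,
        Matrix.mul_smul, smul_smul, sq]
  -- inverse of scaled D
  have hDinvEq : (((t : ℂ) ^ 2) • Df B)⁻¹ = ((t : ℂ) ^ 2)⁻¹ • (Df B)⁻¹ := by
    apply Matrix.inv_eq_right_inv
    rw [Matrix.smul_mul, Matrix.mul_smul, smul_smul, Matrix.mul_nonsing_inv _ hDunit,
      mul_inv_cancel₀ (pow_ne_zero _ ht0), one_smul]
  -- est scaling in the matrix argument
  have hscale : ∀ v, est (fun i => (t : ℂ) • B i) v = ((t : ℂ))⁻¹ • est B v := by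
    intro v
    rw [hest, hest, hD, hDinvEq, hM]
    have h1 : ∑ i, ((t : ℂ) • B i)ᴴ *ᵥ ((S i)⁻¹ *ᵥ v i)
        = (t : ℂ) • ∑ i, (B i)ᴴ *ᵥ ((S i)⁻¹ *ᵥ v i) := by
      rw [Finset.smul_sum]
      refine Finset.sum_congr rfl fun i _ => ?_
      rw [Matrix.conjTranspose_smul, htstar, Matrix.smul_mulVec]
    rw [h1, Matrix.conjTranspose_smul, htstar]
    simp only [Matrix.smul_mulVec, ← smul_sub, Matrix.mulVec_smul, smul_smul]
    congr 1
    field_simp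
  -- unbiasedness : est B (B *ᵥ c) = c
  have hMc : ∑ i, (starRingEnd ℂ) (x i) • ((S i)⁻¹ *ᵥ (B i *ᵥ c)) = Mf B *ᵥ c := by
    rw [hMf, my_sum_mulVec]
    refine Finset.sum_congr rfl fun i _ => ?_
    rw [Matrix.smul_mulVec, ← Matrix.mulVec_mulVec]
  have hP : est B (fun i => B i *ᵥ c) = c := by
    rw [hest]
    have h1 : ∑ i, (B i)ᴴ *ᵥ ((S i)⁻¹ *ᵥ (B i *ᵥ c))
        = (∑ i, (B i)ᴴ * (S i)⁻¹ * B i) *ᵥ c := by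
      rw [my_sum_mulVec]
      refine Finset.sum_congr rfl fun i _ => ?_
      rw [Matrix.mulVec_mulVec, Matrix.mulVec_mulVec, Matrix.mul_assoc]
    rw [h1, hMc, Matrix.mulVec_mulVec, Matrix.mulVec_mulVec, ← Matrix.sub_mulVec,
      ← hDf B, Matrix.mulVec_mulVec,
      Matrix.nonsing_inv_mul _ hDunit, Matrix.one_mulVec]
  -- linearity : est B (a • Bc + u) = a • est B Bc + est B u
  have hlin : ∀ a : ℂ, est B (fun i => a • (B i *ᵥ c) + u i)
      = a • est B (fun i => B i *ᵥ c) + est B u := by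
    intro a
    rw [hest, hest, hest]
    have h1 : ∑ i, (B i)ᴴ *ᵥ ((S i)⁻¹ *ᵥ (a • (B i *ᵥ c) + u i))
        = a • (∑ i, (B i)ᴴ *ᵥ ((S i)⁻¹ *ᵥ (B i *ᵥ c)))
          + ∑ i, (B i)ᴴ *ᵥ ((S i)⁻¹ *ᵥ u i) := by
      rw [Finset.smul_sum, ← Finset.sum_add_distrib]
      refine Finset.sum_congr rfl fun i _ => ?_
      rw [Matrix.mulVec_add, Matrix.mulVec_add, Matrix.mulVec_smul, Matrix.mulVec_smul]
    have h2 : ∑ i, (starRingEnd ℂ) (x i) • ((S i)⁻¹ *ᵥ (a • (B i *ᵥ c) + u i))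
        = a • (∑ i, (starRingEnd ℂ) (x i) • ((S i)⁻¹ *ᵥ (B i *ᵥ c)))
          + ∑ i, (starRingEnd ℂ) (x i) • ((S i)⁻¹ *ᵥ u i) := by
      rw [Finset.smul_sum, ← Finset.sum_add_distrib]
      refine Finset.sum_congr rfl fun i _ => ?_
      rw [Matrix.mulVec_add, Matrix.mulVec_smul, smul_add, smul_comm]
    rw [h1, h2]
    simp only [Matrix.mulVec_add, Matrix.mulVec_sub, Matrix.mulVec_smul]
    module
  -- values of the two estimators
  have hc1 : ctil1 = c + est B u := by
    rw [hctil1, show (fun i => B i *ᵥ c + u i) = (fun i => (1 : ℂ) • (B i *ᵥ c) + u i)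
      from funext fun i => by rw [one_smul], hlin 1, hP, one_smul]
  have hct : ctilt = c + ((t : ℂ))⁻¹ • est B u := by
    rw [hctilt]
    have hv : (fun i => ((t : ℂ) • B i) *ᵥ c + u i)
        = (fun i => (t : ℂ) • (B i *ᵥ c) + u i) := by
      funext i; rw [Matrix.smul_mulVec]
    rw [hv, hscale, hlin, hP, smul_add, smul_smul, inv_mul_cancel₀ ht0, one_smul]
  have hmain : c - ctilt = ((1 / t : ℝ) : ℂ) • (c - ctil1) := by
    rw [hc1, hct]
    push_cast
    rw [one_div]
    module
  refine ⟨hmain, fun n => ?_⟩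
  rw [Matrix.smul_mulVec, hmain, Matrix.mulVec_smul, smul_smul]
  push_cast
  rw [one_div, mul_inv_cancel₀ ht0, one_smul]
end

section
/- For every integer m ≥ 1, the limit as ρ → ∞ of (1 + β_m(ρ)² + ω_m(ρ)²)/s_m(ρ)² equals (1+α²)/(1−α²)². (Scalar form of the asymptotic claim J_{i,n} J_{i,n}^H → N_r (1+α²)/(1−α²)² I_L for i ≠ n in the proof of Proposition 3.) -/
open Filter

/-- **Scalar form of `J_{i,n} J_{i,n}ᴴ → N_r (1+α²)/(1−α²)² I_L` for `i ≠ n`**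
(proof of Proposition 3): for every `m ≥ 1`,
`(1 + β_m(ρ)² + ω_m(ρ)²)/s_m(ρ)² → (1+α²)/(1−α²)²` as `ρ → ∞`. -/
theorem J_limit
    (α : ℝ) (hα0 : 0 < α) (hα1 : α < 1)
    (m : ℕ) (hm : 1 ≤ m)
    (ω β s : ℝ → ℝ)
    (hω : ∀ ρ : ℝ, ω ρ = α ^ m / (1 + ρ * (1 - α ^ (2 * (m - 1)))))
    (hβ : ∀ ρ : ℝ, β ρ
        = ρ * α * (1 - α ^ (2 * (m - 1))) / (1 + ρ * (1 - α ^ (2 * (m - 1)))))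
    (hs : ∀ ρ : ℝ, s ρ
        = (1 / ρ) * (1 + ρ * (1 - α ^ (2 * m)))
          - ρ * α ^ 2 * (1 - α ^ (2 * (m - 1))) ^ 2 / (1 + ρ * (1 - α ^ (2 * (m - 1))))) :
    Tendsto (fun ρ => (1 + β ρ ^ 2 + ω ρ ^ 2) / s ρ ^ 2) atTop
      (nhds ((1 + α ^ 2) / (1 - α ^ 2) ^ 2)) := by
  have hα2 : (0:ℝ) < 1 - α ^ 2 := by nlinarith
  rcases eq_or_lt_of_le hm with h1 | h2
  · -- m = 1
    obtain rfl : m = 1 := h1.symm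
    have heq : (fun ρ : ℝ => (1 + α ^ 2) / (ρ⁻¹ + (1 - α ^ 2)) ^ 2)
        =ᶠ[atTop] (fun ρ => (1 + β ρ ^ 2 + ω ρ ^ 2) / s ρ ^ 2) := by
      filter_upwards [eventually_gt_atTop (0:ℝ)] with ρ hρ
      rw [hω, hβ, hs]
      norm_num
      field_simp
    refine Tendsto.congr' heq ?_
    have hden : Tendsto (fun ρ : ℝ => (ρ⁻¹ + (1 - α ^ 2)) ^ 2) atTop
        (nhds ((1 - α ^ 2) ^ 2)) := by
      have h := (tendsto_inv_atTop_zero.add (tendsto_const_nhds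
        (x := (1 - α ^ 2)) (f := atTop))).pow 2
      simpa using h
    have h := Tendsto.div (tendsto_const_nhds (x := 1 + α ^ 2) (f := atTop)) hden
      (by positivity)
    exact h
  · -- m ≥ 2
    have hk : 2 * (m - 1) ≠ 0 := by omega
    have hc : 0 < 1 - α ^ (2 * (m - 1)) := by
      have := pow_lt_one₀ hα0.le hα1 hk
      linarith
    set c : ℝ := 1 - α ^ (2 * (m - 1)) with hcdef
    have hu : Tendsto (fun ρ : ℝ => (1 + ρ * c)⁻¹) atTop (nhds 0) := by
      apply Tendsto.inv_tendsto_atTop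
      apply tendsto_atTop_add_const_left
      exact Tendsto.atTop_mul_const hc tendsto_id
    have heq : (fun ρ : ℝ => (1 + (α - α * (1 + ρ * c)⁻¹) ^ 2 + (α ^ m * (1 + ρ * c)⁻¹) ^ 2)
          / (ρ⁻¹ + (1 - α ^ (2 * m)) - α ^ 2 * c + α ^ 2 * c * (1 + ρ * c)⁻¹) ^ 2)
        =ᶠ[atTop] (fun ρ => (1 + β ρ ^ 2 + ω ρ ^ 2) / s ρ ^ 2) := by
      filter_upwards [eventually_gt_atTop (0:ℝ)] with ρ hρ
      rw [hω, hβ, hs]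
      have h1 : (0:ℝ) < 1 + ρ * c := by positivity
      field_simp
      ring
    refine Tendsto.congr' heq ?_
    have hnum : Tendsto (fun ρ : ℝ =>
        1 + (α - α * (1 + ρ * c)⁻¹) ^ 2 + (α ^ m * (1 + ρ * c)⁻¹) ^ 2) atTop
        (nhds (1 + α ^ 2)) := by
      have h := (tendsto_const_nhds (x := (1:ℝ)) (f := atTop)).add
        (((tendsto_const_nhds (x := α) (f := atTop)).sub
          ((tendsto_const_nhds (x := α) (f := atTop)).mul hu)).pow 2) |>.add
        (((tendsto_const_nhds (x := α ^ m) (f := atTop)).mul hu).pow 2)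
      simpa using h
    have hval : (1 - α ^ (2 * m)) - α ^ 2 * c = 1 - α ^ 2 := by
      rw [hcdef]
      have : α ^ 2 * α ^ (2 * (m - 1)) = α ^ (2 * m) := by
        rw [← pow_add]
        congr 1
        omega
      nlinarith [this]
    have hden : Tendsto (fun ρ : ℝ =>
        (ρ⁻¹ + (1 - α ^ (2 * m)) - α ^ 2 * c + α ^ 2 * c * (1 + ρ * c)⁻¹) ^ 2) atTop
        (nhds ((1 - α ^ 2) ^ 2)) := by
      have h := (((tendsto_inv_atTop_zero.add
        (tendsto_const_nhds (x := (1 - α ^ (2 * m))) (f := atTop))).sub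
        (tendsto_const_nhds (x := α ^ 2 * c) (f := atTop))).add
        ((tendsto_const_nhds (x := α ^ 2 * c) (f := atTop)).mul hu)).pow 2
      rw [show (0 + (1 - α ^ (2 * m)) - α ^ 2 * c + α ^ 2 * c * 0) = 1 - α ^ 2 by
        rw [← hval]; ring] at h
      exact h
    exact hnum.div hden (by positivity)
end

section
/- For all integers m ≥ 2 and m' ≥ 2, the limit as ρ → ∞ of (1 + β_m(ρ)² + ω_m(ρ)²)/s_m(ρ)² + β_m(ρ)²·(1 + β_{m'}(ρ)² + ω_{m'}(ρ)²)/s_{m'}(ρ)² + 2β_m(ρ)²/(s_m(ρ)·s_{m'}(ρ)) equals (1 + 4α² + α⁴)/(1−α²)². (Scalar form of the asymptotic claim G_{i,n} G_{i,n}^H → N_r (1+α⁴+4α²)/(1−α²)² I_L for i ≠ n in the proof of Proposition 3, which yields the residual-interference floor σ̃_i² = α_p²(1−α_p²)/N_p.) -/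
open Filter

private lemma pieces (α : ℝ) (hα0 : 0 < α) (hα1 : α < 1) (k : ℕ) (hk : 2 ≤ k) :
    Tendsto (fun ρ : ℝ => α ^ k / (1 + ρ * (1 - α ^ (2 * (k - 1))))) atTop (nhds 0) ∧
    Tendsto (fun ρ : ℝ => ρ * α * (1 - α ^ (2 * (k - 1))) / (1 + ρ * (1 - α ^ (2 * (k - 1)))))
      atTop (nhds α) ∧
    Tendsto (fun ρ : ℝ => (1 / ρ) * (1 + ρ * (1 - α ^ (2 * k)))
          - ρ * α ^ 2 * (1 - α ^ (2 * (k - 1))) ^ 2 / (1 + ρ * (1 - α ^ (2 * (k - 1)))))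
      atTop (nhds (1 - α ^ 2)) := by
  set c : ℝ := 1 - α ^ (2 * (k - 1)) with hc
  have hcpos : 0 < c := by
    have : α ^ (2 * (k - 1)) < 1 := pow_lt_one₀ hα0.le hα1 (by omega)
    linarith
  have hden : Tendsto (fun ρ : ℝ => 1 + ρ * c) atTop atTop :=
    tendsto_atTop_add_const_left _ _ (Tendsto.atTop_mul_const hcpos tendsto_id)
  have hev : ∀ᶠ ρ : ℝ in atTop, 1 + ρ * c > 0 := hden.eventually_gt_atTop 0
  have hev1 : ∀ᶠ ρ : ℝ in atTop, (1:ℝ) ≤ ρ := eventually_ge_atTop 1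
  refine ⟨tendsto_const_nhds.div_atTop hden, ?_, ?_⟩
  · have h1 : Tendsto (fun ρ : ℝ => α - α / (1 + ρ * c)) atTop (nhds α) := by
      have h0 : Tendsto (fun ρ : ℝ => α / (1 + ρ * c)) atTop (nhds 0) :=
        tendsto_const_nhds.div_atTop hden
      simpa using (tendsto_const_nhds (x := α)).sub h0
    refine h1.congr' ?_
    filter_upwards [hev] with ρ hρ
    field_simp
    ring
  · have hdα : 1 - α ^ (2 * k) - α ^ 2 * c = 1 - α ^ 2 := by
      have h2 : α ^ (2 * k) = α ^ 2 * α ^ (2 * (k - 1)) := by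
        rw [← pow_add]; congr 1; omega
      rw [hc]; rw [h2]; ring
    have h1 : Tendsto (fun ρ : ℝ => 1 / ρ + (1 - α ^ 2) + α ^ 2 * c / (1 + ρ * c))
        atTop (nhds (1 - α ^ 2)) := by
      have ha' : Tendsto (fun ρ : ℝ => 1 / ρ) atTop (nhds 0) := by
        simpa [one_div] using tendsto_inv_atTop_zero (𝕜 := ℝ)
      have hb : Tendsto (fun ρ : ℝ => α ^ 2 * c / (1 + ρ * c)) atTop (nhds 0) :=
        tendsto_const_nhds.div_atTop hden
      simpa using (ha'.add tendsto_const_nhds).add hb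
    refine h1.congr' ?_
    filter_upwards [hev, hev1] with ρ hρ hρ1
    have hρ0 : ρ ≠ 0 := by linarith
    have hd0 : 1 + ρ * c ≠ 0 := ne_of_gt hρ
    have hrw : (1 : ℝ) - α ^ (2 * k) = 1 - α ^ 2 + α ^ 2 * c := by linarith
    rw [hrw]
    field_simp
    ring

/-- **Scalar form of `G_{i,n} G_{i,n}ᴴ → N_r (1+α⁴+4α²)/(1−α²)² I_L` for `i ≠ n`**
(proof of Proposition 3): for all `m ≥ 2` and `m' ≥ 2`,
`(1+β_m²+ω_m²)/s_m² + β_m²(1+β_{m'}²+ω_{m'}²)/s_{m'}² + 2β_m²/(s_m s_{m'})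
  → (1+4α²+α⁴)/(1−α²)²` as `ρ → ∞`. -/
theorem G_limit
    (α : ℝ) (hα0 : 0 < α) (hα1 : α < 1)
    (m m' : ℕ) (hm : 2 ≤ m) (hm' : 2 ≤ m')
    (ω β s : ℕ → ℝ → ℝ)
    (hω : ∀ (k : ℕ) (ρ : ℝ), ω k ρ = α ^ k / (1 + ρ * (1 - α ^ (2 * (k - 1)))))
    (hβ : ∀ (k : ℕ) (ρ : ℝ), β k ρ
        = ρ * α * (1 - α ^ (2 * (k - 1))) / (1 + ρ * (1 - α ^ (2 * (k - 1)))))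
    (hs : ∀ (k : ℕ) (ρ : ℝ), s k ρ
        = (1 / ρ) * (1 + ρ * (1 - α ^ (2 * k)))
          - ρ * α ^ 2 * (1 - α ^ (2 * (k - 1))) ^ 2 / (1 + ρ * (1 - α ^ (2 * (k - 1))))) :
    Tendsto (fun ρ =>
        (1 + β m ρ ^ 2 + ω m ρ ^ 2) / s m ρ ^ 2
          + β m ρ ^ 2 * ((1 + β m' ρ ^ 2 + ω m' ρ ^ 2) / s m' ρ ^ 2)
          + 2 * β m ρ ^ 2 / (s m ρ * s m' ρ)) atTop
      (nhds ((1 + 4 * α ^ 2 + α ^ 4) / (1 - α ^ 2) ^ 2)) := by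
  obtain ⟨hω1, hβ1, hs1⟩ := pieces α hα0 hα1 m hm
  obtain ⟨hω2, hβ2, hs2⟩ := pieces α hα0 hα1 m' hm'
  have hωm : Tendsto (fun ρ => ω m ρ) atTop (nhds 0) := by simpa [hω] using hω1
  have hωm' : Tendsto (fun ρ => ω m' ρ) atTop (nhds 0) := by simpa [hω] using hω2
  have hβm : Tendsto (fun ρ => β m ρ) atTop (nhds α) := by simpa [hβ] using hβ1
  have hβm' : Tendsto (fun ρ => β m' ρ) atTop (nhds α) := by simpa [hβ] using hβ2
  have hsm : Tendsto (fun ρ => s m ρ) atTop (nhds (1 - α ^ 2)) := by simpa [hs] using hs1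
  have hsm' : Tendsto (fun ρ => s m' ρ) atTop (nhds (1 - α ^ 2)) := by simpa [hs] using hs2
  have hL : (1 : ℝ) - α ^ 2 ≠ 0 := by nlinarith
  have h1 : Tendsto (fun ρ => (1 + β m ρ ^ 2 + ω m ρ ^ 2) / s m ρ ^ 2) atTop
      (nhds ((1 + α ^ 2 + 0 ^ 2) / (1 - α ^ 2) ^ 2)) :=
    ((tendsto_const_nhds.add (hβm.pow 2)).add (hωm.pow 2)).div (hsm.pow 2) (pow_ne_zero 2 hL)
  have h2 : Tendsto (fun ρ => (1 + β m' ρ ^ 2 + ω m' ρ ^ 2) / s m' ρ ^ 2) atTop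
      (nhds ((1 + α ^ 2 + 0 ^ 2) / (1 - α ^ 2) ^ 2)) :=
    ((tendsto_const_nhds.add (hβm'.pow 2)).add (hωm'.pow 2)).div (hsm'.pow 2) (pow_ne_zero 2 hL)
  have h3 : Tendsto (fun ρ => 2 * β m ρ ^ 2 / (s m ρ * s m' ρ)) atTop
      (nhds (2 * α ^ 2 / ((1 - α ^ 2) * (1 - α ^ 2)))) :=
    (tendsto_const_nhds.mul (hβm.pow 2)).div (hsm.mul hsm') (mul_ne_zero hL hL)
  have := (h1.add ((hβm.pow 2).mul h2)).add h3
  convert this using 2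
  field_simp
  ring
end
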